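/- arXiv:1707.01659 — 4 statements merged into one kernel-verified Lean document; each statement's English description precedes it below -/
import Mathlib

section
/- Let ε : ℕ → ℝⁿ satisfy ε(k) = A(k)·ε(k-1) + d(k), where each A(k) belongs to a finite set 𝒜 of matrices, and suppose there exist symmetric positive definite matrices P₁, P₂ such that for every A ∈ 𝒜 with A ≠ A₀ (a distinguished element) we have Aᵀ P₁ A - P₁ < 0 and Aᵀ P₁ A - P₂ < 0, while A₀ᵀ P₂ A₀ - P₂ < 0 and A₀ᵀ P₂ A₀ - P₁ < 0. Then there exist constants c₁ > 0, 0 < ρ < 1, c₂ > 0 such that |ε(k)| ≤ c₁·ρᵏ·|ε(0)| + c₂·∑_{l=0}^{k-1} ρˡ·|d(k-l)| for all k, i.e., the switched system is input-to-state stable. -/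
/-!
With `Q B = P₂` for `B = A₀` and `Q B = P₁` otherwise, the four LMIs say exactly that
`Bᵀ (Q B) B < Q B'` for all modes `B, B'`. Measuring the state in the mode-dependent norm
`V k = ‖ε k‖_{Q (A k)}`, where `‖x‖_P = √(xᵀ P x)`, each strict LMI gives a contraction
`‖B x‖_{Q B} ≤ ρ ‖x‖_{Q B'}` with `ρ < 1`, uniformly over the finitely many pairs of modes.
The triangle inequality then yields `V k ≤ ρ V (k - 1) + M ‖d k‖`, which unrolls to the
estimate, and the equivalence of `‖·‖_P` with the Euclidean norm transfers it to `‖ε k‖`.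
-/

open Matrix Filter Topology Finset
open scoped MatrixOrder

namespace Matrix

variable {ι : Type*} [Fintype ι]

theorem dotProduct_mulVec_conj (Q B : Matrix ι ι ℝ) (x : ι → ℝ) :
    (B *ᵥ x) ⬝ᵥ Q *ᵥ (B *ᵥ x) = x ⬝ᵥ (Bᵀ * Q * B) *ᵥ x := by
  rw [← mulVec_mulVec, ← mulVec_mulVec, dotProduct_mulVec x Bᵀ, vecMul_transpose]

variable [DecidableEq ι]

/-- `‖x‖_P = √(xᵀ P x)` for `P ⪰ 0` (`PosSemidef.weightedNorm_sq`); going through `√P` makes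
the triangle inequality that of the Euclidean norm. -/
noncomputable def weightedNorm (P : Matrix ι ι ℝ) (x : EuclideanSpace ℝ ι) : ℝ :=
  ‖toEuclideanLin (CFC.sqrt P) x‖

theorem weightedNorm_nonneg (P : Matrix ι ι ℝ) (x : EuclideanSpace ℝ ι) :
    0 ≤ weightedNorm P x :=
  norm_nonneg _

theorem weightedNorm_add_le (P : Matrix ι ι ℝ) (x y : EuclideanSpace ℝ ι) :
    weightedNorm P (x + y) ≤ weightedNorm P x + weightedNorm P y := by
  simpa only [weightedNorm, map_add] using norm_add_le _ _

theorem PosSemidef.weightedNorm_sq {P : Matrix ι ι ℝ} (hP : P.PosSemidef)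
    (x : EuclideanSpace ℝ ι) : weightedNorm P x ^ 2 = x.ofLp ⬝ᵥ P *ᵥ x.ofLp := by
  have hsymm : (CFC.sqrt P)ᵀ = CFC.sqrt P := by
    simpa using (CFC.sqrt_nonneg P).posSemidef.isHermitian.eq
  rw [weightedNorm, ← real_inner_self_eq_norm_sq, EuclideanSpace.inner_eq_star_dotProduct]
  simp only [ofLp_toLpLin, toLin'_apply, star_trivial]
  have h := dotProduct_mulVec_conj 1 (CFC.sqrt P) x.ofLp
  rwa [one_mulVec, hsymm, Matrix.mul_one, CFC.sqrt_mul_sqrt_self P hP.nonneg] at h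

theorem eventually_weightedNorm_le_mul_norm (P : Matrix ι ι ℝ) :
    ∀ᶠ M in atTop, ∀ x, weightedNorm P x ≤ M * ‖x‖ := by
  filter_upwards [eventually_ge_atTop ‖toEuclideanCLM (𝕜 := ℝ) (CFC.sqrt P)‖] with M hM x
  exact ((toEuclideanCLM (𝕜 := ℝ) (CFC.sqrt P)).le_opNorm x).trans (by gcongr)

theorem PosDef.eventually_mul_norm_le_weightedNorm {P : Matrix ι ι ℝ} (hP : P.PosDef) :
    ∀ᶠ m in 𝓝[>] 0, ∀ x, m * ‖x‖ ≤ weightedNorm P x := by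
  have hinj : Function.Injective (toEuclideanLin (CFC.sqrt P)) := by
    rw [← LinearMap.ker_eq_bot, LinearMap.ker_eq_bot']
    intro x hx
    by_contra hne
    have hpos := hP.dotProduct_mulVec_pos (x := x.ofLp) (by simpa using hne)
    rw [star_trivial, ← hP.posSemidef.weightedNorm_sq, weightedNorm, hx] at hpos
    simp at hpos
  obtain ⟨K, -, hK⟩ := (LinearMap.injective_iff_antilipschitz _).1 hinj
  obtain ⟨c, hc, hcx⟩ := antilipschitzWith_iff_exists_mul_le_norm.1 ⟨K, hK⟩
  filter_upwards [Ioc_mem_nhdsGT hc] with m hm x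
  exact (mul_le_mul_of_nonneg_right hm.2 (norm_nonneg x)).trans (hcx x)

theorem eventually_weightedNorm_toEuclideanLin_le {Q Q' B : Matrix ι ι ℝ} (hQ : Q.PosSemidef)
    (hQ' : Q'.PosSemidef) (hdecr : (Q' - Bᵀ * Q * B).PosDef) :
    ∀ᶠ ρ in 𝓝[<] 1, ∀ x, weightedNorm Q (toEuclideanLin B x) ≤ ρ * weightedNorm Q' x := by
  set D := Q' - Bᵀ * Q * B
  obtain ⟨m, hmD, hm : 0 < m⟩ :=
    (hdecr.eventually_mul_norm_le_weightedNorm.and self_mem_nhdsWithin).exists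
  obtain ⟨M, hMQ', hM⟩ :=
    ((eventually_weightedNorm_le_mul_norm Q').and (eventually_gt_atTop 0)).exists
  have hlt : √(1 - (m / M) ^ 2) < 1 := by
    rw [Real.sqrt_lt' one_pos]
    have : 0 < m / M := by positivity
    nlinarith
  filter_upwards [Ioo_mem_nhdsLT hlt] with ρ hρ x
  have hρ0 : 0 < ρ := (Real.sqrt_nonneg _).trans_lt hρ.1
  have hρ : 1 - (m / M) ^ 2 < ρ ^ 2 := (Real.sqrt_lt' hρ0).1 hρ.1
  have hsplit : weightedNorm Q (toEuclideanLin B x) ^ 2 =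
      weightedNorm Q' x ^ 2 - weightedNorm D x ^ 2 := by
    rw [hQ.weightedNorm_sq, hQ'.weightedNorm_sq, hdecr.posSemidef.weightedNorm_sq,
      ofLp_toLpLin, toLin'_apply, dotProduct_mulVec_conj, sub_mulVec, dotProduct_sub]
    ring
  have hfrac : (m / M) ^ 2 * weightedNorm Q' x ^ 2 ≤ weightedNorm D x ^ 2 :=
    calc (m / M) ^ 2 * weightedNorm Q' x ^ 2 ≤ (m / M) ^ 2 * (M * ‖x‖) ^ 2 := by
          gcongr
          · exact weightedNorm_nonneg _ _
          · exact hMQ' x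
      _ = (m * ‖x‖) ^ 2 := by field_simp
      _ ≤ weightedNorm D x ^ 2 := by gcongr; exact hmD x
  refine le_of_pow_le_pow_left₀ two_ne_zero (mul_nonneg hρ0.le (weightedNorm_nonneg _ _)) ?_
  have := sq_nonneg (weightedNorm Q' x)
  rw [mul_pow]
  nlinarith

end Matrix

theorem le_pow_mul_add_sum_of_le_mul_add {v w : ℕ → ℝ} {ρ : ℝ} (hρ : 0 ≤ ρ)
    (h : ∀ k, v (k + 1) ≤ ρ * v k + w (k + 1)) (k : ℕ) :
    v k ≤ ρ ^ k * v 0 + ∑ l ∈ range k, ρ ^ l * w (k - l) := by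
  induction k with
  | zero => simp
  | succ k ih =>
    have hsum : ∑ l ∈ range (k + 1), ρ ^ l * w (k + 1 - l) =
        ρ * ∑ l ∈ range k, ρ ^ l * w (k - l) + w (k + 1) := by
      rw [sum_range_succ', mul_sum]
      simp only [pow_succ, Nat.add_sub_add_right, pow_zero, one_mul, Nat.sub_zero]
      congr 1
      exact sum_congr rfl fun l _ => by ring
    calc v (k + 1) ≤ ρ * v k + w (k + 1) := h k
      _ ≤ ρ * (ρ ^ k * v 0 + ∑ l ∈ range k, ρ ^ l * w (k - l)) + w (k + 1) := by gcongr
      _ = ρ ^ (k + 1) * v 0 + ∑ l ∈ range (k + 1), ρ ^ l * w (k + 1 - l) := by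
        rw [hsum]; ring

theorem exists_iss_bound_of_switched_lyapunov {ι : Type*} [Fintype ι] [DecidableEq ι]
    {𝒜 : Finset (Matrix ι ι ℝ)} (Q : Matrix ι ι ℝ → Matrix ι ι ℝ)
    (hQ : ∀ B ∈ 𝒜, (Q B).PosDef)
    (hdecr : ∀ B ∈ 𝒜, ∀ B' ∈ 𝒜, (Q B' - Bᵀ * Q B * B).PosDef)
    (A : ℕ → Matrix ι ι ℝ) (hA : ∀ k, A k ∈ 𝒜) (ε d : ℕ → EuclideanSpace ℝ ι)
    (hrec : ∀ k, ε (k + 1) = toEuclideanLin (A (k + 1)) (ε k) + d (k + 1)) :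
    ∃ c > (0 : ℝ), ∃ ρ : ℝ, 0 < ρ ∧ ρ < 1 ∧
      ∀ k, ‖ε k‖ ≤ c * ρ ^ k * ‖ε 0‖ + c * ∑ l ∈ range k, ρ ^ l * ‖d (k - l)‖ := by
  have hcontr : ∀ᶠ ρ in 𝓝[<] (1 : ℝ), ∀ B ∈ 𝒜, ∀ B' ∈ 𝒜, ∀ x,
      weightedNorm (Q B) (toEuclideanLin B x) ≤ ρ * weightedNorm (Q B') x :=
    (eventually_all_finset 𝒜).2 fun B hB => (eventually_all_finset 𝒜).2 fun B' hB' =>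
      eventually_weightedNorm_toEuclideanLin_le (hQ B hB).posSemidef (hQ B' hB').posSemidef
        (hdecr B hB B' hB')
  obtain ⟨ρ, hcontr, hρ0, hρ1⟩ := (hcontr.and (Ioo_mem_nhdsLT one_pos)).exists
  obtain ⟨m, hlow, hm : 0 < m⟩ := (((eventually_all_finset 𝒜).2 fun B hB =>
    (hQ B hB).eventually_mul_norm_le_weightedNorm).and self_mem_nhdsWithin).exists
  obtain ⟨M, hup, hM⟩ := (((eventually_all_finset 𝒜).2 fun B _ =>
    eventually_weightedNorm_le_mul_norm (Q B)).and (eventually_gt_atTop 0)).exists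
  set v : ℕ → ℝ := fun k => weightedNorm (Q (A k)) (ε k)
  have hstep : ∀ k, v (k + 1) ≤ ρ * v k + M * ‖d (k + 1)‖ := fun k =>
    calc v (k + 1) ≤ weightedNorm (Q (A (k + 1))) (toEuclideanLin (A (k + 1)) (ε k)) +
          weightedNorm (Q (A (k + 1))) (d (k + 1)) := by
          simp only [v, hrec]; exact weightedNorm_add_le _ _ _
      _ ≤ ρ * v k + M * ‖d (k + 1)‖ :=
          add_le_add (hcontr _ (hA _) _ (hA k) _) (hup _ (hA _) _)
  refine ⟨M / m, by positivity, ρ, hρ0, hρ1, fun k => ?_⟩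
  have hiter := le_pow_mul_add_sum_of_le_mul_add (w := fun k => M * ‖d k‖) hρ0.le hstep k
  simp only [mul_left_comm _ M, ← mul_sum] at hiter
  calc ‖ε k‖ = m * ‖ε k‖ / m := by field_simp
    _ ≤ (ρ ^ k * (M * ‖ε 0‖) + M * ∑ l ∈ range k, ρ ^ l * ‖d (k - l)‖) / m := by
        gcongr
        calc m * ‖ε k‖ ≤ v k := hlow _ (hA k) _
          _ ≤ _ := hiter
          _ ≤ _ := by gcongr; exact hup _ (hA 0) _
    _ = M / m * ρ ^ k * ‖ε 0‖ + M / m * ∑ l ∈ range k, ρ ^ l * ‖d (k - l)‖ := by ring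

theorem stmt_1_general {n : ℕ}
    (𝒜 : Finset (Matrix (Fin n) (Fin n) ℝ)) (A₀ : Matrix (Fin n) (Fin n) ℝ)
    (P₁ P₂ : Matrix (Fin n) (Fin n) ℝ) (hP₁ : P₁.PosDef) (hP₂ : P₂.PosDef)
    (hlmi : ∀ A ∈ 𝒜, A ≠ A₀ →
      (P₁ - Aᵀ * P₁ * A).PosDef ∧ (P₂ - Aᵀ * P₁ * A).PosDef)
    (hlmi₀ : (P₂ - A₀ᵀ * P₂ * A₀).PosDef ∧ (P₁ - A₀ᵀ * P₂ * A₀).PosDef)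
    (A : ℕ → Matrix (Fin n) (Fin n) ℝ) (hA : ∀ k, A k ∈ 𝒜)
    (ε d : ℕ → EuclideanSpace ℝ (Fin n))
    (hrec : ∀ k, 1 ≤ k → ε k = (A k).toEuclideanLin (ε (k - 1)) + d k) :
    ∃ c₁ > (0 : ℝ), ∃ ρ : ℝ, 0 < ρ ∧ ρ < 1 ∧ ∃ c₂ > (0 : ℝ),
      ∀ k, ‖ε k‖ ≤ c₁ * ρ ^ k * ‖ε 0‖ +
        c₂ * ∑ l ∈ Finset.range k, ρ ^ l * ‖d (k - l)‖ := by
  classical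
  have hQ : ∀ B ∈ 𝒜, (if B = A₀ then P₂ else P₁).PosDef := fun B _ => by
    split_ifs
    exacts [hP₂, hP₁]
  have hdecr : ∀ B ∈ 𝒜, ∀ B' ∈ 𝒜,
      ((if B' = A₀ then P₂ else P₁) - Bᵀ * (if B = A₀ then P₂ else P₁) * B).PosDef := by
    intro B hB B' _
    by_cases hB₀ : B = A₀
    · rw [if_pos hB₀, hB₀]
      split_ifs
      exacts [hlmi₀.1, hlmi₀.2]
    · rw [if_neg hB₀]
      split_ifs
      exacts [(hlmi B hB hB₀).2, (hlmi B hB hB₀).1]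
  obtain ⟨c, hc, ρ, hρ0, hρ1, hbound⟩ :=
    exists_iss_bound_of_switched_lyapunov _ hQ hdecr A hA ε d
      fun k => by simpa using hrec (k + 1) k.succ_pos
  exact ⟨c, hc, ρ, hρ0, hρ1, c, hc, hbound⟩

theorem stmt_1 {n : ℕ}
    (𝒜 : Finset (Matrix (Fin n) (Fin n) ℝ)) (A₀ : Matrix (Fin n) (Fin n) ℝ)
    (hA₀ : A₀ ∈ 𝒜)
    (P₁ P₂ : Matrix (Fin n) (Fin n) ℝ) (hP₁ : P₁.PosDef) (hP₂ : P₂.PosDef)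
    (hlmi : ∀ A ∈ 𝒜, A ≠ A₀ →
      (P₁ - Aᵀ * P₁ * A).PosDef ∧ (P₂ - Aᵀ * P₁ * A).PosDef)
    (hlmi₀ : (P₂ - A₀ᵀ * P₂ * A₀).PosDef ∧ (P₁ - A₀ᵀ * P₂ * A₀).PosDef)
    (A : ℕ → Matrix (Fin n) (Fin n) ℝ) (hA : ∀ k, A k ∈ 𝒜)
    (ε d : ℕ → EuclideanSpace ℝ (Fin n))
    (hrec : ∀ k, 1 ≤ k → ε k = (A k).toEuclideanLin (ε (k - 1)) + d k) :
    ∃ c₁ > (0 : ℝ), ∃ ρ : ℝ, 0 < ρ ∧ ρ < 1 ∧ ∃ c₂ > (0 : ℝ),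
      ∀ k, ‖ε k‖ ≤ c₁ * ρ ^ k * ‖ε 0‖ +
        c₂ * ∑ l ∈ Finset.range k, ρ ^ l * ‖d (k - l)‖ :=
  stmt_1_general 𝒜 A₀ P₁ P₂ hP₁ hP₂ hlmi hlmi₀ A hA ε d hrec
end

section
/- Suppose H and P are symmetric matrices (H ∈ ℝ²ⁿˣ²ⁿ, P ∈ ℝⁿˣⁿ) with H ⪰ [[P, P·A₊],[A₊ᵀ·P, P]] ≻ 0, and for every m ∈ {1,…,N} the block matrix [[P, P·(I - Lₘ Cₘ)·A₊],[A₊ᵀ·(I - Lₘ Cₘ)ᵀ·P, P]] ≻ ((N-1)/N)·H. Then for every nonempty subset S ⊆ {1,…,N}, the block matrix [[P, P·A_cl(S)],[A_cl(S)ᵀ·P, P]] is positive definite, where A_cl(S) = (I - ∑_{m∈S} Lₘ Cₘ)·A₊. -/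
/-!
The block `Φ(A) = [[P, P A], [Aᵀ P, P]]` depends affinely on `A`, and
`A_cl(S) - A₊ = ∑_{m ∈ S} (Aₘ - A₊)` with `Aₘ = (I - Lₘ Cₘ) A₊`, so
`Φ(A_cl(S)) = Φ(A₊) + ∑_{m ∈ S} (Φ(Aₘ) - Φ(A₊))`.
With `k = |S|` and `c = (N-1)/N` this equals
`∑_{m ∈ S} (Φ(Aₘ) - c H) + k c (H - Φ(A₊)) + (1 - k (1 - c)) Φ(A₊)`,
a sum of positive definite matrices and nonnegative multiples of positive semidefinite ones,
because `k (1 - c) = k / N ≤ 1`.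
-/

open Matrix Finset

namespace Matrix

variable {ι n R : Type*}

section StabilityBlock

variable [Fintype n] [CommRing R]

def stabilityBlock (P A : Matrix n n R) : Matrix (n ⊕ n) (n ⊕ n) R :=
  fromBlocks P (P * A) (Aᵀ * P) P

def stabilityBlockCoupling (P : Matrix n n R) : Matrix n n R →+ Matrix (n ⊕ n) (n ⊕ n) R where
  toFun D := fromBlocks 0 (P * D) (Dᵀ * P) 0
  map_zero' := by simp
  map_add' D D' := by simp [fromBlocks_add, mul_add, add_mul]

theorem stabilityBlock_add (P A D : Matrix n n R) :
    stabilityBlock P (A + D) = stabilityBlock P A + stabilityBlockCoupling P D := by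
  simp [stabilityBlock, stabilityBlockCoupling, fromBlocks_add, mul_add, add_mul]

theorem stabilityBlock_add_sum_sub (P A : Matrix n n R) (S : Finset ι)
    (B : ι → Matrix n n R) :
    stabilityBlock P (A + ∑ i ∈ S, (B i - A))
      = stabilityBlock P A + ∑ i ∈ S, (stabilityBlock P (B i) - stabilityBlock P A) := by
  have hB : ∀ i,
      stabilityBlock P (B i) - stabilityBlock P A = stabilityBlockCoupling P (B i - A) :=
    fun i => by rw [sub_eq_iff_eq_add', ← stabilityBlock_add, add_sub_cancel]
  simp only [stabilityBlock_add, map_sum, hB]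

end StabilityBlock

variable [CommRing R] [PartialOrder R] [StarRing R] [StarOrderedRing R]

theorem posDef_add_sum_sub {S : Finset ι} (hS : S.Nonempty) {M₀ H : Matrix n n R}
    {M : ι → Matrix n n R} {c : R} (hc : 0 ≤ c) (hSc : (#S : R) * (1 - c) ≤ 1)
    (h₀ : M₀.PosSemidef) (hH : (H - M₀).PosSemidef)
    (hM : ∀ i ∈ S, (M i - c • H).PosDef) :
    (M₀ + ∑ i ∈ S, (M i - M₀)).PosDef := by
  have hsplit : M₀ + ∑ i ∈ S, (M i - M₀)
      = ∑ i ∈ S, (M i - c • H) + ((#S : R) * c) • (H - M₀)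
        + (1 - #S * (1 - c)) • M₀ := by
    simp only [sum_sub_distrib, sum_const, ← Nat.cast_smul_eq_nsmul R]
    module
  rw [hsplit]
  exact ((posDef_sum hS hM).add_posSemidef (hH.smul (mul_nonneg (Nat.cast_nonneg _) hc)))
    |>.add_posSemidef (h₀.smul (sub_nonneg.mpr hSc))

end Matrix

theorem stmt_4_general {n N : ℕ} (p : Fin N → ℕ)
    (Aplus : Matrix (Fin n) (Fin n) ℝ)
    (L : ∀ m : Fin N, Matrix (Fin n) (Fin (p m)) ℝ)
    (C : ∀ m : Fin N, Matrix (Fin (p m)) (Fin n) ℝ)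
    (P : Matrix (Fin n) (Fin n) ℝ)
    (H : Matrix (Fin n ⊕ Fin n) (Fin n ⊕ Fin n) ℝ)
    (h1 : (H - Matrix.fromBlocks P (P * Aplus) (Aplusᵀ * P) P).PosSemidef)
    (h2 : (Matrix.fromBlocks P (P * Aplus) (Aplusᵀ * P) P).PosDef)
    (h3 : ∀ m : Fin N,
      (Matrix.fromBlocks P (P * (1 - L m * C m) * Aplus)
          (Aplusᵀ * (1 - L m * C m)ᵀ * P) P
        - (((N : ℝ) - 1) / N) • H).PosDef) :
    ∀ S : Finset (Fin N), S.Nonempty →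
      (Matrix.fromBlocks P (P * ((1 - ∑ m ∈ S, L m * C m) * Aplus))
        (((1 - ∑ m ∈ S, L m * C m) * Aplus)ᵀ * P) P).PosDef := by
  intro S hS
  have hSN : (#S : ℝ) ≤ N := by exact_mod_cast (card_le_univ S).trans_eq (Fintype.card_fin N)
  have hN : (1 : ℝ) ≤ N := le_trans (by exact_mod_cast hS.card_pos) hSN
  have hA : (1 - ∑ m ∈ S, L m * C m) * Aplus
      = Aplus + ∑ m ∈ S, ((1 - L m * C m) * Aplus - Aplus) := by
    rw [sub_mul, one_mul, sum_mul, sub_eq_add_neg, ← sum_neg_distrib]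
    simp only [sub_mul, one_mul, sub_sub_cancel_left]
  have hblock : ∀ m, Matrix.fromBlocks P (P * (1 - L m * C m) * Aplus)
      (Aplusᵀ * (1 - L m * C m)ᵀ * P) P = stabilityBlock P ((1 - L m * C m) * Aplus) :=
    fun m => by
    simp only [stabilityBlock, transpose_mul, Matrix.mul_assoc]
  change (stabilityBlock P _).PosDef
  rw [hA, stabilityBlock_add_sum_sub]
  refine posDef_add_sum_sub hS (div_nonneg (by linarith) (by linarith)) ?_ h2.posSemidef h1
    fun m _ => hblock m ▸ h3 m
  rw [one_sub_div (by positivity), sub_sub_cancel, mul_one_div]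
  exact div_le_one_of_le₀ hSN (by positivity)

theorem stmt_4 {n N : ℕ} (hN : 1 ≤ N) (p : Fin N → ℕ)
    (Aplus : Matrix (Fin n) (Fin n) ℝ)
    (L : ∀ m : Fin N, Matrix (Fin n) (Fin (p m)) ℝ)
    (C : ∀ m : Fin N, Matrix (Fin (p m)) (Fin n) ℝ)
    (P : Matrix (Fin n) (Fin n) ℝ)
    (H : Matrix (Fin n ⊕ Fin n) (Fin n ⊕ Fin n) ℝ) (hH : H.IsHermitian)
    (h1 : (H - Matrix.fromBlocks P (P * Aplus) (Aplusᵀ * P) P).PosSemidef)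
    (h2 : (Matrix.fromBlocks P (P * Aplus) (Aplusᵀ * P) P).PosDef)
    (h3 : ∀ m : Fin N,
      (Matrix.fromBlocks P (P * (1 - L m * C m) * Aplus)
          (Aplusᵀ * (1 - L m * C m)ᵀ * P) P
        - (((N : ℝ) - 1) / N) • H).PosDef) :
    ∀ S : Finset (Fin N), S.Nonempty →
      (Matrix.fromBlocks P (P * ((1 - ∑ m ∈ S, L m * C m) * Aplus))
        (((1 - ∑ m ∈ S, L m * C m) * Aplus)ᵀ * P) P).PosDef :=
  stmt_4_general p Aplus L C P H h1 h2 h3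
end

section
/- Let e : ℕ → ℝⁿ evolve as e(k) = M·e(k-1) + d(k), where the disturbance d may be any bounded sequence. If M has an eigenvalue λ (possibly complex) with |λ| ≥ 1, then there exists a bounded disturbance sequence d and initial condition e(0) such that the resulting trajectory e(k) is unbounded. Hence the system is not input-to-state stable. -/
/-!
Let `μ` be an eigenvalue of `M` with `‖μ‖ ≥ 1` and `v ∈ ℂⁿ` an eigenvector. Forcing the complex system
along `v` with the unit-norm input `u ^ k • v`, where `u = μ / ‖μ‖` is the phase of `μ`, gives the
trajectory `ζ k • v` with `ζ k = u ^ k * ∑ i < k, ‖μ‖ ^ i`: all contributions to `ζ k` have the same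
phase, so `‖ζ k‖ ≥ k`. Since `M` is real, taking real or imaginary parts coordinatewise maps complex
trajectories to real ones and bounded inputs to bounded inputs, and if both parts of the trajectory
were bounded, so would be the trajectory itself.
-/

open Matrix

theorem Matrix.exists_mulVec_eq_smul_of_mem_spectrum {K ι : Type*} [Field K] [Fintype ι]
    [DecidableEq ι] {A : Matrix ι ι K} {μ : K} (h : μ ∈ spectrum K A) :
    ∃ v, v ≠ 0 ∧ A *ᵥ v = μ • v := by
  rw [← spectrum_toLin', ← Module.End.hasEigenvalue_iff_mem_spectrum] at h
  obtain ⟨v, hv⟩ := h.exists_hasEigenvector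
  exact ⟨v, hv.2, Module.End.mem_eigenspace_iff.1 hv.1⟩

theorem Complex.exists_forced_response_norm_ge {μ : ℂ} (hμ : 1 ≤ ‖μ‖) :
    ∃ ζ c : ℕ → ℂ, (∀ k, ‖c k‖ = 1) ∧ (∀ k, ζ (k + 1) = μ * ζ k + c (k + 1)) ∧
      ∀ k : ℕ, (k : ℝ) ≤ ‖ζ k‖ := by
  have hμ₀ : μ ≠ 0 := norm_pos_iff.1 (zero_lt_one.trans_le hμ)
  obtain ⟨u, hu, hμu⟩ : ∃ u : ℂ, ‖u‖ = 1 ∧ μ = u * ‖μ‖ := ⟨μ / ‖μ‖, by simp [hμ₀], by simp [hμ₀]⟩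
  generalize ‖μ‖ = r at hμ hμu
  subst hμu
  refine ⟨fun k => u ^ k * ↑(∑ i ∈ Finset.range k, r ^ i), fun k => u ^ k,
    fun k => by simp [hu], fun k => ?_, fun k => ?_⟩
  · simp only [geom_sum_succ]
    push_cast
    ring
  · rw [norm_mul, norm_pow, hu, one_pow, one_mul, Complex.norm_real,
      Real.norm_of_nonneg (by positivity)]
    simpa using Finset.card_nsmul_le_sum (Finset.range k) _ 1 fun i _ => one_le_pow₀ hμ

noncomputable def componentwiseCLM (f : ℂ →L[ℝ] ℝ) (ι : Type*) [Fintype ι] :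
    (ι → ℂ) →L[ℝ] EuclideanSpace ℝ ι :=
  (EuclideanSpace.equiv ι ℝ).symm.toContinuousLinearMap ∘L
    ContinuousLinearMap.pi fun i => f ∘L ContinuousLinearMap.proj i

section Componentwise

variable {ι : Type*} [Fintype ι]

@[simp]
theorem componentwiseCLM_apply (f : ℂ →L[ℝ] ℝ) (z : ι → ℂ) (i : ι) :
    componentwiseCLM f ι z i = f (z i) :=
  rfl

theorem componentwiseCLM_mulVec_map_ofReal [DecidableEq ι] (f : ℂ →L[ℝ] ℝ) (M : Matrix ι ι ℝ)
    (z : ι → ℂ) :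
    componentwiseCLM f ι (M.map Complex.ofReal *ᵥ z) = M.toEuclideanLin (componentwiseCLM f ι z) := by
  ext i
  simp [mulVec, dotProduct, ← Complex.real_smul]

theorem norm_le_componentwiseCLM_re_add_im (z : ι → ℂ) :
    ‖z‖ ≤ ‖componentwiseCLM Complex.reCLM ι z‖ + ‖componentwiseCLM Complex.imCLM ι z‖ :=
  (pi_norm_le_iff_of_nonneg (by positivity)).2 fun i =>
    (Complex.norm_le_abs_re_add_abs_im (z i)).trans
      (add_le_add (by simpa using PiLp.norm_apply_le (componentwiseCLM Complex.reCLM ι z) i)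
        (by simpa using PiLp.norm_apply_le (componentwiseCLM Complex.imCLM ι z) i))

end Componentwise

theorem Matrix.exists_real_unbounded_of_complex {ι : Type*} [Fintype ι] [DecidableEq ι]
    (M : Matrix ι ι ℝ) {z w : ℕ → ι → ℂ}
    (hz : ∀ k, z (k + 1) = M.map Complex.ofReal *ᵥ z k + w (k + 1))
    (hw : ∃ D, ∀ k, ‖w k‖ ≤ D) (hunb : ¬ ∃ B, ∀ k, ‖z k‖ ≤ B) :
    ∃ d : ℕ → EuclideanSpace ℝ ι, ∃ D : ℝ, (∀ k, ‖d k‖ ≤ D) ∧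
      ∃ e : ℕ → EuclideanSpace ℝ ι,
        (∀ k, e (k + 1) = M.toEuclideanLin (e k) + d (k + 1)) ∧ ¬ ∃ B, ∀ k, ‖e k‖ ≤ B := by
  obtain ⟨D, hD⟩ := hw
  have bounded_input (f : ℂ →L[ℝ] ℝ) (k : ℕ) :
      ‖componentwiseCLM f ι (w k)‖ ≤ ‖componentwiseCLM f ι‖ * D :=
    (ContinuousLinearMap.le_opNorm _ _).trans (by gcongr; exact hD k)
  have recursion (f : ℂ →L[ℝ] ℝ) (k : ℕ) :
      componentwiseCLM f ι (z (k + 1)) =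
        M.toEuclideanLin (componentwiseCLM f ι (z k)) + componentwiseCLM f ι (w (k + 1)) := by
    rw [hz, map_add, componentwiseCLM_mulVec_map_ofReal]
  by_cases hre : ∃ B, ∀ k, ‖componentwiseCLM Complex.reCLM ι (z k)‖ ≤ B
  · obtain ⟨B, hB⟩ := hre
    refine ⟨_, _, bounded_input Complex.imCLM, fun k => componentwiseCLM Complex.imCLM ι (z k),
      recursion Complex.imCLM, ?_⟩
    rintro ⟨B', hB'⟩
    exact hunb ⟨B + B', fun k =>
      (norm_le_componentwiseCLM_re_add_im (z k)).trans (add_le_add (hB k) (hB' k))⟩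
  · exact ⟨_, _, bounded_input Complex.reCLM, fun k => componentwiseCLM Complex.reCLM ι (z k),
      recursion Complex.reCLM, hre⟩

theorem stmt_7 {n : ℕ} (M : Matrix (Fin n) (Fin n) ℝ)
    (hM : ∃ μ ∈ spectrum ℂ (M.map (Complex.ofReal)), 1 ≤ ‖μ‖) :
    ∃ d : ℕ → EuclideanSpace ℝ (Fin n), ∃ D : ℝ, (∀ k, ‖d k‖ ≤ D) ∧
      ∃ e : ℕ → EuclideanSpace ℝ (Fin n),
        (∀ k, 1 ≤ k → e k = M.toEuclideanLin (e (k - 1)) + d k) ∧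
        ¬ ∃ B : ℝ, ∀ k, ‖e k‖ ≤ B := by
  obtain ⟨μ, hμ, hμ_norm⟩ := hM
  obtain ⟨v, hv, hMv⟩ := exists_mulVec_eq_smul_of_mem_spectrum hμ
  obtain ⟨ζ, c, hc, hζ, hζ_norm⟩ := Complex.exists_forced_response_norm_ge hμ_norm
  have trajectory (k : ℕ) :
      ζ (k + 1) • v = M.map Complex.ofReal *ᵥ (ζ k • v) + c (k + 1) • v := by
    rw [mulVec_smul, hMv, hζ, add_smul, smul_smul, mul_comm]
  have input_bounded (k : ℕ) : ‖c k • v‖ ≤ ‖v‖ := by rw [norm_smul, hc, one_mul]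
  have trajectory_unbounded : ¬ ∃ B, ∀ k, ‖ζ k • v‖ ≤ B := by
    rintro ⟨B, hB⟩
    obtain ⟨k, hk⟩ := exists_nat_gt (B / ‖v‖)
    have hB_lt := (hB k).trans_lt ((div_lt_iff₀ (norm_pos_iff.2 hv)).1 hk)
    rw [norm_smul] at hB_lt
    exact hB_lt.not_ge (by gcongr; exact hζ_norm k)
  obtain ⟨d, D, hD, e, he, he_unb⟩ :=
    exists_real_unbounded_of_complex M trajectory ⟨_, input_bounded⟩ trajectory_unbounded
  refine ⟨d, D, hD, e, fun k hk => ?_, he_unb⟩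
  obtain ⟨m, rfl⟩ := Nat.exists_eq_add_of_le' hk
  exact he m
end

section
/- In the two-agent counterexample with A = diag(0.5, 2), B = [[0,1],[1,0]], C = I₂, F = [[0,-2],[0.1,0]], L = I₂: the closed-loop matrices A + BF = diag(0.6, 0) and (I - LC)·A = 0 are Schur stable, yet if agents share true inputs, the trajectory defined by x(k) = (0, 2ᵏ)ᵀ, x̂₁(k) = 0, x̂₂(k) = x(k), u(k) = F·x̂-based inputs never triggers communication (each agent's measurement prediction error stays below threshold 1) and x(k) is unbounded. Formally: the sequence x(k) = (0, 2ᵏ)ᵀ satisfies the closed-loop recursions with zero noise and communication thresholds Δ₁ = Δ₂ = 1, and |x(k)| → ∞. -/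
/-!
Agent 1's estimate is `0` and agent 2's estimate is the true state `(0, 2ᵏ)`. Agent 1 applies
row 0 of `F` to `0`, and agent 2 applies row 1 of `F`, which only reads the first coordinate `0`,
so the true input is identically zero. The open loop `x ↦ A x` then doubles the unstable second
coordinate at every step, while both agents predict their own measurement exactly, so no event
is ever triggered.
-/

open Matrix Filter Topology

theorem mulVec_vec2 {α : Type*} [NonUnitalNonAssocSemiring α] (a b c d s t : α) :
    !![a, b; c, d] *ᵥ ![s, t] = ![a * s + b * t, c * s + d * t] :=
  (mulVecᵣ_eq _ _).symm

theorem norm_lt_one_of_mem_spectrum_map_ofReal_diagonal {n : Type*} [Fintype n] [DecidableEq n]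
    {d : n → ℝ} (hd : ∀ i, |d i| < 1) {μ : ℂ}
    (hμ : μ ∈ spectrum ℂ ((diagonal d).map Complex.ofReal)) : ‖μ‖ < 1 := by
  rw [diagonal_map Complex.ofReal_zero, spectrum_diagonal] at hμ
  obtain ⟨i, rfl⟩ := hμ
  simpa only [Function.comp_apply, Complex.norm_real, Real.norm_eq_abs] using hd i

theorem stmt_18
    (A B F L C : Matrix (Fin 2) (Fin 2) ℝ)
    (hA : A = !![1/2, 0; 0, 2]) (hB : B = !![0, 1; 1, 0])
    (hF : F = !![0, -2; 1/10, 0]) (hL : L = 1) (hC : C = 1)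
    (x xh1 xh2 u : ℕ → Fin 2 → ℝ)
    (hx : ∀ k, x k = ![0, 2 ^ k])
    (hxh1 : ∀ k, xh1 k = 0)
    (hxh2 : ∀ k, xh2 k = x k)
    (hu : ∀ k, u k = ![(F.mulVec (xh1 k)) 0, (F.mulVec (xh2 k)) 1]) :
    -- A + BF is Schur stable and (I - LC)A = 0 (hence Schur stable)
    (A + B * F = !![3/5, 0; 0, 0]) ∧
    (∀ μ ∈ spectrum ℂ ((A + B * F).map (Complex.ofReal)), ‖μ‖ < 1) ∧
    ((1 - L * C) * A = 0) ∧
    -- the trajectory satisfies the closed-loop dynamics with zero noise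
    (∀ k, 1 ≤ k → x k = A.mulVec (x (k - 1)) + B.mulVec (u (k - 1))) ∧
    -- with shared true inputs, both agents' measurement prediction errors stay
    -- below the thresholds Δ₁ = Δ₂ = 1 (no communication is ever triggered),
    -- and the no-communication estimator updates are satisfied
    (∀ k, 1 ≤ k →
      |x k 0 - (A.mulVec (xh1 (k - 1)) + B.mulVec (u (k - 1))) 0| < 1 ∧
      |x k 1 - (A.mulVec (xh2 (k - 1)) + B.mulVec (u (k - 1))) 1| < 1 ∧
      xh1 k = A.mulVec (xh1 (k - 1)) + B.mulVec (u (k - 1)) ∧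
      xh2 k = A.mulVec (xh2 (k - 1)) + B.mulVec (u (k - 1))) ∧
    -- yet the state is unbounded: |x(k)| → ∞
    Tendsto (fun k => Real.sqrt ((x k 0) ^ 2 + (x k 1) ^ 2)) atTop atTop := by
  have hABF : A + B * F = !![3/5, 0; 0, 0] := by
    rw [hA, hB, hF, mul_fin_two]; norm_num
  have hu0 : ∀ k, u k = 0 := by
    intro k
    rw [hu, hxh1, hxh2, hx, hF, mulVec_zero, mulVec_vec2]
    simp
  have hstep : ∀ k, 1 ≤ k → x k = A *ᵥ x (k - 1) := by
    intro k hk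
    obtain ⟨n, rfl⟩ := Nat.exists_eq_add_of_le' hk
    rw [Nat.add_sub_cancel, hx, hx, hA, mulVec_vec2]
    congr 2 <;> ring
  refine ⟨hABF, ?_, ?_, ?_, ?_, ?_⟩
  · rw [hABF, ← diagonal_vec2]
    exact fun μ ↦
      norm_lt_one_of_mem_spectrum_map_ofReal_diagonal (by norm_num [Fin.forall_fin_two])
  · rw [hL, hC, mul_one, sub_self, zero_mul]
  · intro k hk
    rw [hu0, mulVec_zero, add_zero, hstep k hk]
  · intro k hk
    simp only [hu0, hxh1, hxh2, mulVec_zero, add_zero, ← hstep k hk]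
    simp [hx]
  · have hnorm : ∀ k, Real.sqrt ((x k 0) ^ 2 + (x k 1) ^ 2) = 2 ^ k := by
      intro k
      simp [hx]
    simp only [hnorm]
    exact tendsto_pow_atTop_atTop_of_one_lt one_lt_two
end
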